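/- arXiv:1201.2251 — 5 statements merged into one kernel-verified Lean document; each statement's English description precedes it below -/
import Mathlib

section
/- For the Martinet distribution on ℝ³ spanned by X = ∂x − (y²/2)∂z and Y = ∂y, the straight-line curve γ̂(t) = (t, 0, 0), t ∈ [0,1], is semi-rigid: for any smooth family of horizontal curves γ^s(t) = (x^s(t), y^s(t), z^s(t)) with γ⁰ = γ̂ and fixed endpoints (so ż^s = −(1/2)(y^s)² ẋ^s and z^s(0) = z^s(1) = 0 for all s), the variation vector field Z(t) = ∂_s γ^s(t)|_{s=0} necessarily has zero ∂y-component; in particular, if y^s(t) = s v(t) + o(s) with v smooth and v(0) = v(1) = 0, then z^s(1) = −(s²/2)∫₀¹ v(t)² dt + o(s²), which forces v ≡ 0. -/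
open MeasureTheory intervalIntegral Set Filter Metric

/-- Chain rule: partial derivative in the first variable of a smooth 2-parameter family. -/
lemma martinet_aux_hasDerivAt_fst (f : ℝ → ℝ → ℝ)
    (hf : ContDiff ℝ (⊤ : ℕ∞) (fun p : ℝ × ℝ => f p.1 p.2)) (t s : ℝ) :
    HasDerivAt (fun s' => f s' t)
      (fderiv ℝ (fun p : ℝ × ℝ => f p.1 p.2) (s, t) (1, 0)) s := by
  have h := (hf.differentiable (by simp) (s, t)).hasFDerivAt
  have hc : HasDerivAt (fun s' : ℝ => ((s', t) : ℝ × ℝ)) ((1 : ℝ), (0 : ℝ)) s :=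
    HasDerivAt.prodMk (hasDerivAt_id s) (hasDerivAt_const s t)
  exact h.comp_hasDerivAt s hc

/-- Chain rule: partial derivative in the second variable of a smooth 2-parameter family. -/
lemma martinet_aux_hasDerivAt_snd (f : ℝ → ℝ → ℝ)
    (hf : ContDiff ℝ (⊤ : ℕ∞) (fun p : ℝ × ℝ => f p.1 p.2)) (s t : ℝ) :
    HasDerivAt (f s)
      (fderiv ℝ (fun p : ℝ × ℝ => f p.1 p.2) (s, t) (0, 1)) t := by
  have h := (hf.differentiable (by simp) (s, t)).hasFDerivAt
  have hc : HasDerivAt (fun t' : ℝ => ((s, t') : ℝ × ℝ)) ((0 : ℝ), (1 : ℝ)) t :=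
    HasDerivAt.prodMk (hasDerivAt_const t s) (hasDerivAt_id t)
  exact h.comp_hasDerivAt t hc

/-- Continuity of a directional derivative of a smooth function. -/
lemma martinet_aux_cont_fderiv (f : ℝ → ℝ → ℝ)
    (hf : ContDiff ℝ (⊤ : ℕ∞) (fun p : ℝ × ℝ => f p.1 p.2)) (w : ℝ × ℝ) :
    Continuous fun p : ℝ × ℝ => fderiv ℝ (fun q : ℝ × ℝ => f q.1 q.2) p w := by
  have h : Continuous (fderiv ℝ (fun q : ℝ × ℝ => f q.1 q.2)) :=
    hf.continuous_fderiv (by simp)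
  exact (ContinuousLinearMap.apply ℝ ℝ w).continuous.comp h

/-- The straight line `t ↦ (t,0,0)` is semi-rigid for the Martinet distribution:
any smooth horizontal variation with fixed endpoints has variation vector field
with vanishing `∂y`-component. -/
theorem martinet_line_semi_rigid
    (x y z : ℝ → ℝ → ℝ)  -- families: first argument is the parameter s, second is t
    (hx : ContDiff ℝ (⊤ : ℕ∞) (fun p : ℝ × ℝ => x p.1 p.2))
    (hy : ContDiff ℝ (⊤ : ℕ∞) (fun p : ℝ × ℝ => y p.1 p.2))
    (hz : ContDiff ℝ (⊤ : ℕ∞) (fun p : ℝ × ℝ => z p.1 p.2))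
    -- horizontality: ż = -(1/2) y² ẋ for every s
    (hhor : ∀ s t, deriv (z s) t = -(1 / 2) * (y s t) ^ 2 * deriv (x s) t)
    -- the base curve is γ̂(t) = (t, 0, 0)
    (hbase : ∀ t, x 0 t = t ∧ y 0 t = 0 ∧ z 0 t = 0)
    -- fixed endpoints γ̂(0) = (0,0,0), γ̂(1) = (1,0,0)
    (hend0 : ∀ s, x s 0 = 0 ∧ y s 0 = 0 ∧ z s 0 = 0)
    (hend1 : ∀ s, x s 1 = 1 ∧ y s 1 = 0 ∧ z s 1 = 0) :
    ∀ t ∈ Set.Icc (0:ℝ) 1, deriv (fun s => y s t) 0 = 0 := by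
  set g : ℝ × ℝ → ℝ :=
    fun p => fderiv ℝ (fun q : ℝ × ℝ => y q.1 q.2) p ((1 : ℝ), (0 : ℝ)) with hgdef
  set dx : ℝ × ℝ → ℝ :=
    fun p => fderiv ℝ (fun q : ℝ × ℝ => x q.1 q.2) p ((0 : ℝ), (1 : ℝ)) with hdxdef
  have hgcont : Continuous g := martinet_aux_cont_fderiv y hy _
  have hdxcont : Continuous dx := martinet_aux_cont_fderiv x hx _
  have hyd : ∀ s t : ℝ, HasDerivAt (fun s' => y s' t) (g (s, t)) s :=
    fun s t => martinet_aux_hasDerivAt_fst y hy t s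
  have hxd : ∀ s t : ℝ, HasDerivAt (x s) (dx (s, t)) t :=
    fun s t => martinet_aux_hasDerivAt_snd x hx s t
  have hdxval : ∀ s t : ℝ, deriv (x s) t = dx (s, t) := fun s t => (hxd s t).deriv
  -- continuity of slices
  have hys : ∀ s : ℝ, Continuous (y s) :=
    fun s => hy.continuous.comp (continuous_const.prodMk continuous_id)
  have hdxs : ∀ s : ℝ, Continuous fun t => dx (s, t) :=
    fun s => hdxcont.comp (continuous_const.prodMk continuous_id)
  -- Step C : for every s, ∫₀¹ y² dx = 0
  have hC : ∀ s : ℝ, (∫ t in (0:ℝ)..1, (y s t) ^ 2 * dx (s, t)) = 0 := by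
    intro s
    have hzder : ∀ t ∈ Set.uIcc (0:ℝ) 1,
        HasDerivAt (z s) (-(1 / 2) * (y s t) ^ 2 * dx (s, t)) t := by
      intro t _
      have h := martinet_aux_hasDerivAt_snd z hz s t
      have e : fderiv ℝ (fun q : ℝ × ℝ => z q.1 q.2) (s, t) ((0 : ℝ), (1 : ℝ))
          = -(1 / 2) * (y s t) ^ 2 * dx (s, t) := by
        rw [← h.deriv, hhor s t, hdxval s t]
      rw [← e]
      exact h
    have hcont1 : Continuous fun t => -(1 / 2) * (y s t) ^ 2 * dx (s, t) :=
      ((continuous_const.mul ((hys s).pow 2)).mul (hdxs s))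
    have key := integral_eq_sub_of_hasDerivAt hzder (hcont1.intervalIntegrable 0 1)
    rw [(hend1 s).2.2, (hend0 s).2.2, sub_zero] at key
    calc (∫ t in (0:ℝ)..1, (y s t) ^ 2 * dx (s, t))
        = ∫ t in (0:ℝ)..1, (-2 : ℝ) * (-(1 / 2) * (y s t) ^ 2 * dx (s, t)) := by
          congr 1; funext t; ring
      _ = (-2 : ℝ) * ∫ t in (0:ℝ)..1, -(1 / 2) * (y s t) ^ 2 * dx (s, t) :=
          integral_const_mul _ _
      _ = 0 := by rw [key]; ring
  -- Hadamard factorization y s t = s * u s t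
  set u : ℝ → ℝ → ℝ := fun s t => ∫ τ in (0:ℝ)..1, g (s * τ, t) with hudef
  have hfact : ∀ s t : ℝ, y s t = s * u s t := by
    intro s t
    have h1 : (∫ σ in (0:ℝ)..s, g (σ, t)) = y s t - y 0 t :=
      integral_eq_sub_of_hasDerivAt (fun σ _ => hyd σ t)
        ((hgcont.comp (continuous_id.prodMk continuous_const)).intervalIntegrable 0 s)
    rw [(hbase t).2.1, sub_zero] at h1
    have h2 : s * u s t = ∫ σ in (s * 0)..(s * 1), g (σ, t) := by
      simpa [smul_eq_mul] using
        smul_integral_comp_mul_left (fun σ => g (σ, t)) s (a := 0) (b := 1)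
    rw [mul_zero, mul_one] at h2
    rw [h2, h1]
  have hucont : Continuous fun p : ℝ × ℝ => u p.1 p.2 := by
    apply continuous_parametric_intervalIntegral_of_continuous'
      (f := fun (p : ℝ × ℝ) (τ : ℝ) => g (p.1 * τ, p.2))
    exact hgcont.comp
      (((continuous_fst.fst).mul continuous_snd).prodMk (continuous_fst.snd))
  -- the renormalized functional
  set Phi : ℝ → ℝ := fun s => ∫ t in (0:ℝ)..1, (u s t) ^ 2 * dx (s, t) with hPhidef
  have hPhicont : Continuous Phi := by
    apply continuous_parametric_intervalIntegral_of_continuous'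
      (f := fun (s : ℝ) (t : ℝ) => (u s t) ^ 2 * dx (s, t))
    exact ((hucont.pow 2).mul hdxcont)
  have hPhi0 : ∀ s : ℝ, s ≠ 0 → Phi s = 0 := by
    intro s hs
    have h : (∫ t in (0:ℝ)..1, (y s t) ^ 2 * dx (s, t)) = s ^ 2 * Phi s := by
      calc (∫ t in (0:ℝ)..1, (y s t) ^ 2 * dx (s, t))
          = ∫ t in (0:ℝ)..1, s ^ 2 * ((u s t) ^ 2 * dx (s, t)) := by
            congr 1; funext t; rw [hfact s t]; ring
        _ = s ^ 2 * Phi s := integral_const_mul _ _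
    have h2 : s ^ 2 * Phi s = 0 := by rw [← h]; exact hC s
    exact (mul_eq_zero.mp h2).resolve_left (pow_ne_zero 2 hs)
  have hPhi00 : Phi 0 = 0 := by
    have h1 : Tendsto Phi (nhdsWithin (0:ℝ) {(0:ℝ)}ᶜ) (nhds (Phi 0)) :=
      (hPhicont.tendsto 0).mono_left nhdsWithin_le_nhds
    have h2 : Tendsto Phi (nhdsWithin (0:ℝ) {(0:ℝ)}ᶜ) (nhds (0:ℝ)) := by
      apply Tendsto.congr' _ tendsto_const_nhds
      filter_upwards [self_mem_nhdsWithin] with s hs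
      exact (hPhi0 s hs).symm
    exact tendsto_nhds_unique h1 h2
  -- compute Phi 0
  have hdx0 : ∀ t : ℝ, dx (0, t) = 1 := by
    intro t
    have h := (hxd 0 t).deriv
    have hx0 : x 0 = fun t : ℝ => t := funext fun t => (hbase t).1
    rw [hx0] at h
    simpa using h.symm
  have hu0 : ∀ t : ℝ, u 0 t = g (0, t) := by
    intro t
    simp [hudef]
  have hV : (∫ t in (0:ℝ)..1, (g (0, t)) ^ 2) = 0 := by
    calc (∫ t in (0:ℝ)..1, (g (0, t)) ^ 2)
        = ∫ t in (0:ℝ)..1, (u 0 t) ^ 2 * dx (0, t) := by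
          congr 1; funext t; rw [hu0, hdx0]; ring
      _ = 0 := hPhi00
  -- the variation field component v t = g (0, t)
  have hvcont : Continuous fun t : ℝ => g (0, t) :=
    hgcont.comp (continuous_const.prodMk continuous_id)
  have hint : ∀ p q : ℝ, IntervalIntegrable (fun r => (g (0, r)) ^ 2) volume p q :=
    fun p q => ((hvcont.pow 2)).intervalIntegrable p q
  -- main claim : g (0, t) = 0 on [0,1]
  have hmain : ∀ t ∈ Set.Icc (0:ℝ) 1, g (0, t) = 0 := by
    intro t ht
    by_contra hne
    -- endpoints : trivially zero
    have hv0 : g (0, (0:ℝ)) = 0 := by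
      have h := (hyd 0 0).deriv
      have : (fun s => y s 0) = fun _ : ℝ => (0:ℝ) := funext fun s => (hend0 s).2.1
      rw [this] at h
      simpa using h.symm
    have hv1 : g (0, (1:ℝ)) = 0 := by
      have h := (hyd 0 1).deriv
      have : (fun s => y s 1) = fun _ : ℝ => (0:ℝ) := funext fun s => (hend1 s).2.1
      rw [this] at h
      simpa using h.symm
    have ht0 : t ≠ 0 := by rintro rfl; exact hne hv0
    have ht1 : t ≠ 1 := by rintro rfl; exact hne hv1
    have htI : t ∈ Set.Ioo (0:ℝ) 1 :=
      ⟨lt_of_le_of_ne ht.1 (Ne.symm ht0), lt_of_le_of_ne ht.2 ht1⟩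
    -- an open neighbourhood where g(0,·)² is positive
    have hS : IsOpen {r : ℝ | 0 < (g (0, r)) ^ 2} :=
      isOpen_lt continuous_const (hvcont.pow 2)
    have htmem : t ∈ ({r : ℝ | 0 < (g (0, r)) ^ 2} ∩ Set.Ioo 0 1) :=
      ⟨lt_of_le_of_ne (sq_nonneg _) (Ne.symm (pow_ne_zero 2 hne)), htI⟩
    obtain ⟨ε, εpos, hball⟩ :=
      Metric.isOpen_iff.mp (hS.inter isOpen_Ioo) t htmem
    set ε' : ℝ := min ε (min t (1 - t)) with hε'def
    have hε'pos : 0 < ε' := lt_min εpos (lt_min htI.1 (by linarith [htI.2]))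
    have hε'ε : ε' ≤ ε := min_le_left _ _
    have hε't : ε' ≤ t := le_trans (min_le_right _ _) (min_le_left _ _)
    have hε't1 : ε' ≤ 1 - t := le_trans (min_le_right _ _) (min_le_right _ _)
    set a : ℝ := t - ε' / 2 with hadef
    set b : ℝ := t + ε' / 2 with hbdef
    have hab : a < b := by simp only [hadef, hbdef]; linarith
    have ha0 : (0:ℝ) ≤ a := by simp only [hadef]; linarith
    have hb1 : b ≤ 1 := by simp only [hbdef]; linarith
    have hsub : Set.Ioo a b ⊆ {r : ℝ | 0 < (g (0, r)) ^ 2} := by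
      intro r hr
      have : r ∈ Metric.ball t ε := by
        rw [Real.ball_eq_Ioo]
        constructor
        · have := hr.1; simp only [hadef] at this; linarith
        · have := hr.2; simp only [hbdef] at this; linarith
      exact (hball this).1
    have hmid : 0 < ∫ r in a..b, (g (0, r)) ^ 2 :=
      intervalIntegral_pos_of_pos_on (hint a b) (fun r hr => hsub hr) hab
    have h0a : 0 ≤ ∫ r in (0:ℝ)..a, (g (0, r)) ^ 2 :=
      integral_nonneg ha0 (fun r _ => by positivity)
    have hb1' : 0 ≤ ∫ r in b..1, (g (0, r)) ^ 2 :=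
      integral_nonneg hb1 (fun r _ => by positivity)
    have e1 := integral_add_adjacent_intervals (hint 0 a) (hint a b)
    have e2 := integral_add_adjacent_intervals (hint 0 b) (hint b 1)
    -- 0 = ∫₀¹ = ∫₀ᵃ + ∫ₐᵇ + ∫ᵇ¹ > 0, contradiction
    rw [← e1] at e2
    rw [← e2] at hV
    linarith
  -- conclude
  intro t ht
  rw [(hyd 0 t).deriv]
  exact hmain t ht
end

section
/- For a fixed positive integer n, the map f_n from ℝ × ℂ (with the universal-cover SU(1,1) group law) to diffeomorphisms of ℝ, given by f_n(s, w)(θ) = θ + (2/n)s + (2/n)Arg(√(|w|²+1) − i w̄ e^{−i(nθ+s)}), is a group homomorphism: f_n(s₁,w₁) ∘ f_n(s₂,w₂) = f_n((s₁,w₁)·(s₂,w₂)). -/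
/-!
Write `a = √(‖w‖² + 1)` and `Φ(w, u) = a - i w̄ u`. For `‖u‖ = 1` we have `‖i w̄ u‖ = ‖w‖ < a`, so
`Re Φ > 0`, and `e^{-2i Arg Φ} = Φ̄ / Φ`. Hence `f_n(s, w)` moves the circle point `e^{-i(nθ + s)}`
by the unit factor `e^{-2is} Φ̄ / Φ`, and the homomorphism property reduces to the identity
`‖A‖ · Φ(w₁, ·) Φ(w₂, u) = A · Φ(w₃, ·)`, where `A` is the argument of `Arg` in the group law and
`‖w₃‖² + 1 = ‖A‖²`. All four factors have positive real part, so their arguments add with no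
`2π` ambiguity.
-/

open Complex

/-- The map `f_n : ℝ × ℂ → (ℝ → ℝ)` embedding the universal cover of `SU(1,1)`
into diffeomorphisms of `ℝ`. -/
noncomputable def fEmb (n : ℕ) (s : ℝ) (w : ℂ) (θ : ℝ) : ℝ :=
  θ + (2 / n) * s + (2 / n) * Complex.arg
    ((Real.sqrt (‖w‖ ^ 2 + 1) : ℂ)
      - I * (starRingEnd ℂ w) * Complex.exp (-I * ((n : ℝ) * θ + s)))

/-- The group law on the universal cover `ℝ × ℂ` of `SU(1,1)`. -/
noncomputable def suCoverMul (p q : ℝ × ℂ) : ℝ × ℂ :=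
  (p.1 + q.1 + Complex.arg
      ((Real.sqrt ((‖p.2‖ ^ 2 + 1) * (‖q.2‖ ^ 2 + 1)) : ℂ)
        + (starRingEnd ℂ p.2) * q.2 * Complex.exp (-I * ((p.1 : ℝ) + q.1))),
    q.2 * Complex.exp (-I * (p.1 : ℝ)) * (Real.sqrt (‖p.2‖ ^ 2 + 1) : ℂ)
      + p.2 * Complex.exp (I * (q.1 : ℝ)) * (Real.sqrt (‖q.2‖ ^ 2 + 1) : ℂ))

open ComplexConjugate

namespace Complex

theorem arg_mul_of_re_pos {x y : ℂ} (hx : 0 < x.re) (hy : 0 < y.re) :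
    arg (x * y) = arg x + arg y := by
  have hx' := abs_lt.mp (abs_arg_lt_pi_div_two_iff.mpr (Or.inl hx))
  have hy' := abs_lt.mp (abs_arg_lt_pi_div_two_iff.mpr (Or.inl hy))
  exact arg_mul (ne_zero_of_re_pos hx) (ne_zero_of_re_pos hy)
    ⟨by linarith [hx'.1, hy'.1], by linarith [hx'.2, hy'.2]⟩

theorem re_add_pos_of_norm_lt {a : ℝ} {u : ℂ} (h : ‖u‖ < a) : 0 < ((a : ℂ) + u).re := by
  have := neg_abs_le u.re
  have := abs_re_le_norm u
  simp only [add_re, ofReal_re]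
  linarith

theorem exp_neg_arg_mul_I {z : ℂ} (hz : z ≠ 0) : exp (-(arg z * I)) = conj z / ‖z‖ := by
  have hnorm : (‖z‖ : ℂ) ≠ 0 := ofReal_ne_zero.mpr (norm_ne_zero_iff.mpr hz)
  rw [eq_div_iff hnorm]
  conv_rhs => rw [← norm_mul_exp_arg_mul_I z]
  rw [map_mul, ← exp_conj, conj_ofReal, map_mul, conj_ofReal, conj_I, mul_comm]
  ring_nf

theorem exp_neg_two_arg_mul_I {z : ℂ} (hz : z ≠ 0) : exp (-(2 * arg z * I)) = conj z / z := by
  have hnorm : (‖z‖ : ℂ) ≠ 0 := ofReal_ne_zero.mpr (norm_ne_zero_iff.mpr hz)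
  rw [show -(2 * arg z * I) = -(arg z * I) + -(arg z * I) by ring, exp_add,
    exp_neg_arg_mul_I hz]
  field_simp
  rw [← mul_conj']
  ring

theorem mul_norm_sub_mul_conj_div_norm {A : ℂ} (hA : A ≠ 0) (c : ℂ) :
    A * (‖A‖ - c * (conj A / ‖A‖)) = ‖A‖ * (A - c) := by
  have hnorm : (‖A‖ : ℂ) ≠ 0 := ofReal_ne_zero.mpr (norm_ne_zero_iff.mpr hA)
  field_simp
  linear_combination (-c) * mul_conj' A

theorem norm_lt_sqrt_norm_sq_add_one (w : ℂ) : ‖w‖ < Real.sqrt (‖w‖ ^ 2 + 1) :=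
  Real.lt_sqrt_of_sq_lt (lt_add_one _)

theorem ofReal_sqrt_norm_sq_add_one_sq (w : ℂ) :
    (Real.sqrt (‖w‖ ^ 2 + 1) : ℂ) ^ 2 = w * conj w + 1 := by
  rw [← ofReal_pow, Real.sq_sqrt (by positivity), mul_conj']
  push_cast
  ring

theorem mul_conj_eq_one_of_norm_eq_one {z : ℂ} (hz : ‖z‖ = 1) : z * conj z = 1 := by
  rw [mul_conj', hz]
  norm_num

end Complex

noncomputable def fEmbFactor (w u : ℂ) : ℂ :=
  (Real.sqrt (‖w‖ ^ 2 + 1) : ℂ) - I * conj w * u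

theorem fEmb_eq (n : ℕ) (s : ℝ) (w : ℂ) (θ : ℝ) :
    fEmb n s w θ = θ + 2 / n * (s + arg (fEmbFactor w (exp (-I * ((n : ℝ) * θ + s))))) := by
  rw [fEmb, fEmbFactor]
  ring

theorem re_fEmbFactor_pos (w : ℂ) {u : ℂ} (hu : ‖u‖ = 1) : 0 < (fEmbFactor w u).re := by
  rw [fEmbFactor, sub_eq_add_neg]
  exact re_add_pos_of_norm_lt (by simpa [hu] using norm_lt_sqrt_norm_sq_add_one w)

theorem conj_fEmbFactor (w u : ℂ) :
    conj (fEmbFactor w u) = (Real.sqrt (‖w‖ ^ 2 + 1) : ℂ) + I * w * conj u := by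
  simp only [fEmbFactor, map_sub, map_mul, conj_ofReal, conj_I, conj_conj]
  ring

section Cocycle

variable (w₁ w₂ : ℂ) {u P Q : ℂ}

local notation "a₁" => (Real.sqrt (‖w₁‖ ^ 2 + 1) : ℂ)
local notation "a₂" => (Real.sqrt (‖w₂‖ ^ 2 + 1) : ℂ)

theorem norm_sq_add_one_eq_norm_sq (hP : ‖P‖ = 1) (hQ : ‖Q‖ = 1) :
    ‖w₂ * P * a₁ + w₁ * conj Q * a₂‖ ^ 2 + 1 = ‖a₁ * a₂ + conj w₁ * w₂ * (P * Q)‖ ^ 2 := by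
  apply ofReal_injective
  push_cast
  rw [← mul_conj', ← mul_conj']
  simp only [map_add, map_mul, conj_ofReal, conj_conj]
  linear_combination (w₂ * conj w₂ - a₂ ^ 2) * ofReal_sqrt_norm_sq_add_one_sq w₁
    - ofReal_sqrt_norm_sq_add_one_sq w₂
    + (w₂ * conj w₂ * a₁ ^ 2 - w₁ * conj w₁ * (w₂ * conj w₂)) * mul_conj_eq_one_of_norm_eq_one hP
    + (w₁ * conj w₁ * a₂ ^ 2 - w₁ * conj w₁ * (w₂ * conj w₂) * (P * conj P))
      * mul_conj_eq_one_of_norm_eq_one hQ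

theorem fEmbFactor_mul_fEmbFactor (hu : ‖u‖ = 1) (hP : ‖P‖ = 1) :
    fEmbFactor w₁ (u * (P * Q) * (conj (fEmbFactor w₂ u) / fEmbFactor w₂ u)) * fEmbFactor w₂ u
      = a₁ * a₂ + conj w₁ * w₂ * (P * Q)
        - I * conj (w₂ * P * a₁ + w₁ * conj Q * a₂) * (u * P) := by
  have hΦ : fEmbFactor w₂ u ≠ 0 := ne_zero_of_re_pos (re_fEmbFactor_pos w₂ hu)
  calc _ = a₁ * fEmbFactor w₂ u - I * conj w₁ * (u * (P * Q)) * conj (fEmbFactor w₂ u) := by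
        rw [fEmbFactor]
        field_simp
    _ = _ := by
      rw [conj_fEmbFactor, fEmbFactor]
      simp only [map_add, map_mul, conj_ofReal, conj_conj]
      linear_combination (conj w₁ * w₂ * (P * Q)) * mul_conj_eq_one_of_norm_eq_one hu
        + a₁ * I * conj w₂ * u * mul_conj_eq_one_of_norm_eq_one hP
        - u * conj u * conj w₁ * w₂ * (P * Q) * I_sq

theorem re_sqrt_mul_sqrt_add_pos (hP : ‖P‖ = 1) (hQ : ‖Q‖ = 1) :
    0 < (a₁ * a₂ + conj w₁ * w₂ * (P * Q)).re := by
  rw [← ofReal_mul]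
  refine re_add_pos_of_norm_lt ?_
  simpa [hP, hQ] using mul_lt_mul'' (norm_lt_sqrt_norm_sq_add_one w₁)
    (norm_lt_sqrt_norm_sq_add_one w₂) (norm_nonneg _) (norm_nonneg _)

theorem arg_fEmbFactor_cocycle (hu : ‖u‖ = 1) (hP : ‖P‖ = 1) (hQ : ‖Q‖ = 1) {A w₃ : ℂ}
    (hA : A = a₁ * a₂ + conj w₁ * w₂ * (P * Q)) (hw₃ : w₃ = w₂ * P * a₁ + w₁ * conj Q * a₂) :
    arg (fEmbFactor w₁ (u * (P * Q) * (conj (fEmbFactor w₂ u) / fEmbFactor w₂ u)))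
        + arg (fEmbFactor w₂ u)
      = arg A + arg (fEmbFactor w₃ (u * P * (conj A / ‖A‖))) := by
  have hA_re : 0 < A.re := hA ▸ re_sqrt_mul_sqrt_add_pos w₁ w₂ hP hQ
  have hA₀ : A ≠ 0 := ne_zero_of_re_pos hA_re
  have hΦ₂₀ : fEmbFactor w₂ u ≠ 0 := ne_zero_of_re_pos (re_fEmbFactor_pos w₂ hu)
  have hw₃_sqrt : Real.sqrt (‖w₃‖ ^ 2 + 1) = ‖A‖ := by
    rw [hw₃, norm_sq_add_one_eq_norm_sq w₁ w₂ hP hQ, ← hA, Real.sqrt_sq (norm_nonneg A)]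
  have key : A * fEmbFactor w₃ (u * P * (conj A / ‖A‖))
      = ‖A‖ * (fEmbFactor w₁ (u * (P * Q) * (conj (fEmbFactor w₂ u) / fEmbFactor w₂ u))
        * fEmbFactor w₂ u) := by
    rw [fEmbFactor_mul_fEmbFactor w₁ w₂ hu hP, ← hA, ← hw₃, fEmbFactor, hw₃_sqrt,
      ← mul_norm_sub_mul_conj_div_norm hA₀]
    ring
  rw [← arg_mul_of_re_pos (re_fEmbFactor_pos w₁ (by simp [hu, hP, hQ, hΦ₂₀]))
      (re_fEmbFactor_pos w₂ hu),
    ← arg_mul_of_re_pos hA_re (re_fEmbFactor_pos w₃ (by simp [hu, hP, hA₀])), key,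
    arg_real_mul _ (norm_pos_iff.mpr hA₀)]

theorem suCoverMul_eq (s₁ s₂ : ℝ) :
    suCoverMul (s₁, w₁) (s₂, w₂) =
      (s₁ + s₂ + arg (a₁ * a₂ + conj w₁ * w₂ * (exp (-I * s₁) * exp (-I * s₂))),
        w₂ * exp (-I * s₁) * a₁ + w₁ * conj (exp (-I * s₂)) * a₂) := by
  have hconj : conj (exp (-I * s₂)) = exp (I * s₂) := by rw [← exp_conj]; simp
  rw [suCoverMul, Real.sqrt_mul (by positivity), hconj, ← exp_add, ← mul_add, ofReal_mul]

end Cocycle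

theorem exp_neg_I_mul_fEmb {n : ℕ} (hn : n ≠ 0) (s t : ℝ) (w : ℂ) (θ : ℝ) :
    exp (-I * ((n : ℝ) * fEmb n s w θ + t))
      = exp (-I * ((n : ℝ) * θ + s)) * (exp (-I * t) * exp (-I * s))
        * (conj (fEmbFactor w (exp (-I * ((n : ℝ) * θ + s))))
          / fEmbFactor w (exp (-I * ((n : ℝ) * θ + s)))) := by
  have hn₀ : (n : ℂ) ≠ 0 := Nat.cast_ne_zero.mpr hn
  rw [fEmb_eq, ← exp_neg_two_arg_mul_I (ne_zero_of_re_pos (re_fEmbFactor_pos w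
    (by simp [norm_exp]))), ← exp_add, ← exp_add, ← exp_add]
  congr 1
  push_cast
  field_simp
  ring

theorem fEmb_homomorphism_general (n : ℕ) (s₁ s₂ : ℝ) (w₁ w₂ : ℂ) (θ : ℝ) :
    fEmb n s₁ w₁ (fEmb n s₂ w₂ θ)
      = fEmb n (suCoverMul (s₁, w₁) (s₂, w₂)).1 (suCoverMul (s₁, w₁) (s₂, w₂)).2 θ := by
  rcases n.eq_zero_or_pos with rfl | hn
  · -- `2 / 0 = 0` in `ℝ`, so `fEmb 0 s w` is the identity
    simp [fEmb]
  rw [suCoverMul_eq, fEmb_eq n s₁, exp_neg_I_mul_fEmb hn.ne', fEmb_eq n s₂, fEmb_eq]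
  set u := exp (-I * ((n : ℝ) * θ + s₂))
  set P := exp (-I * s₁)
  set Q := exp (-I * s₂)
  have hu : ‖u‖ = 1 := by simp [u, norm_exp]
  have hP : ‖P‖ = 1 := by simp [P, norm_exp]
  have hQ : ‖Q‖ = 1 := by simp [Q, norm_exp]
  set A : ℂ := Real.sqrt (‖w₁‖ ^ 2 + 1) * Real.sqrt (‖w₂‖ ^ 2 + 1) + conj w₁ * w₂ * (P * Q)
    with hA
  set w₃ := w₂ * P * Real.sqrt (‖w₁‖ ^ 2 + 1) + w₁ * conj Q * Real.sqrt (‖w₂‖ ^ 2 + 1) with hw₃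
  have hA_arg : exp (-I * ((n : ℝ) * θ + (s₁ + s₂ + arg A : ℝ))) = u * P * (conj A / ‖A‖) := by
    rw [← exp_neg_arg_mul_I (ne_zero_of_re_pos (re_sqrt_mul_sqrt_add_pos w₁ w₂ hP hQ)),
      ← exp_add, ← exp_add]
    congr 1
    push_cast
    ring
  rw [hA_arg]
  linear_combination (2 / n : ℝ) * arg_fEmbFactor_cocycle w₁ w₂ hu hP hQ hA hw₃

theorem fEmb_homomorphism (n : ℕ) (hn : 0 < n) (s₁ s₂ : ℝ) (w₁ w₂ : ℂ) (θ : ℝ) :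
    fEmb n s₁ w₁ (fEmb n s₂ w₂ θ)
      = fEmb n (suCoverMul (s₁, w₁) (s₂, w₂)).1 (suCoverMul (s₁, w₁) (s₂, w₂)).2 θ :=
  fEmb_homomorphism_general n s₁ s₂ w₁ w₂ θ
end

section
/- The map f_n(s,w)(θ) = θ + (2/n)s + (2/n)Arg(√(|w|²+1) − i w̄ e^{−i(nθ+s)}) is injective as a homomorphism: if f_n(s,w) is the identity map of ℝ, then s = 0 and w = 0. -/
open Complex

theorem Complex.exists_mul_exp_mul_I_eq {u z : ℂ} (h : ‖z‖ = ‖u‖) :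
    ∃ t : ℝ, u * exp (t * I) = z := by
  rcases eq_or_ne u 0 with rfl | -
  · exact ⟨0, by simpa [eq_comm] using h⟩
  refine ⟨arg z - arg u, ?_⟩
  calc u * exp ((arg z - arg u : ℝ) * I)
      = ‖u‖ * exp (arg u * I) * exp ((arg z - arg u : ℝ) * I) := by
        rw [norm_mul_exp_arg_mul_I]
    _ = ‖z‖ * exp (arg z * I) := by
        rw [h, mul_assoc, ← exp_add]
        push_cast
        ring_nf
    _ = z := norm_mul_exp_arg_mul_I z

theorem arg_eq_neg_of_fEmb_eq_id {n : ℕ} (hn : n ≠ 0) {s : ℝ} {w : ℂ}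
    (h : ∀ θ : ℝ, fEmb n s w θ = θ) (t : ℝ) :
    arg ((Real.sqrt (‖w‖ ^ 2 + 1) : ℂ) - I * starRingEnd ℂ w * exp (-I * t)) = -s := by
  have hn' : (n : ℝ) ≠ 0 := Nat.cast_ne_zero.mpr hn
  have hθ : (n : ℝ) * ((t - s) / n) + s = t := by field_simp; ring
  have ht := h ((t - s) / n)
  rw [fEmb, ← ofReal_mul, ← ofReal_add, hθ] at ht
  refine mul_left_cancel₀ (show (2 / n : ℝ) ≠ 0 by positivity) ?_
  linarith

theorem arg_sqrt_add_eq_neg_of_fEmb_eq_id {n : ℕ} (hn : n ≠ 0) {s : ℝ} {w : ℂ}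
    (h : ∀ θ : ℝ, fEmb n s w θ = θ) {z : ℂ} (hz : ‖z‖ = ‖w‖) :
    arg ((Real.sqrt (‖w‖ ^ 2 + 1) : ℂ) + z) = -s := by
  obtain ⟨t, ht⟩ := exists_mul_exp_mul_I_eq (u := -I * starRingEnd ℂ w) (z := z) (by simp [hz])
  rw [← arg_eq_neg_of_fEmb_eq_id hn h (-t), ← ht]
  congr 1
  push_cast
  ring_nf

theorem fEmb_injective (n : ℕ) (hn : 0 < n) (s : ℝ) (w : ℂ)
    (h : ∀ θ : ℝ, fEmb n s w θ = θ) : s = 0 ∧ w = 0 := by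
  have hs : s = 0 := by
    have hreal := arg_sqrt_add_eq_neg_of_fEmb_eq_id hn.ne' h (z := ‖w‖) (by simp)
    rw [← ofReal_add, arg_ofReal_of_nonneg (by positivity)] at hreal
    linarith
  have himag := arg_sqrt_add_eq_neg_of_fEmb_eq_id hn.ne' h (z := ‖w‖ * I) (by simp)
  rw [hs, neg_zero, arg_eq_zero_iff] at himag
  exact ⟨hs, norm_eq_zero.mp (by simpa using himag.2)⟩
end

section
/- For the left-invariant Riemannian structure on a Lie group given by an inner product ⟨·,·⟩ on the Lie algebra 𝔤 = 𝔥 ⊕ 𝔨 with 𝔥 ⊥ 𝔨, if the inner product is ad(𝔨)-invariant (⟨[k,x],y⟩ = −⟨x,[k,y]⟩ for all k ∈ 𝔨) and u: I → 𝔤 satisfies the Euler–Arnold equation ⟨u̇, x⟩ = ⟨u, [u, x]⟩ for all x ∈ 𝔤, then λ(t) = pr_𝔨 u(t) is constant, where pr_𝔨 is the orthogonal projection onto 𝔨. -/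
/-!
For `k ∈ 𝔨` the Euler–Arnold equation gives `d/dt ⟪u, k⟫ = ⟪u, [u, k]⟫`, which vanishes because
`ad k` is skew-adjoint; hence `u t - u 0 ⊥ 𝔨`, and the two projections onto `𝔨` agree.
-/

open scoped InnerProductSpace

section

variable {V : Type*} [NormedAddCommGroup V] [InnerProductSpace ℝ V]

theorem inner_self_bracket_eq_zero_of_skewAdjoint {bracket : V → V → V}
    (hskew : ∀ x y : V, bracket x y = -bracket y x) {k : V}
    (hk : ∀ x y : V, ⟪bracket k x, y⟫_ℝ = -⟪x, bracket k y⟫_ℝ) (x : V) :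
    ⟪x, bracket x k⟫_ℝ = 0 := by
  have hself : ⟪bracket k x, x⟫_ℝ = -⟪x, bracket k x⟫_ℝ := hk x x
  rw [real_inner_comm] at hself
  rw [hskew, inner_neg_right]
  linarith

theorem inner_const_of_inner_deriv_eq_zero {u : ℝ → V} (hu : Differentiable ℝ u) {k : V}
    (h : ∀ t, ⟪deriv u t, k⟫_ℝ = 0) (t s : ℝ) : ⟪u t, k⟫_ℝ = ⟪u s, k⟫_ℝ := by
  have hderiv : ∀ t, HasDerivAt (fun t => ⟪u t, k⟫_ℝ) ⟪deriv u t, k⟫_ℝ t := fun t => by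
    simpa using (hu t).hasDerivAt.inner ℝ (hasDerivAt_const t k)
  exact is_const_of_deriv_eq_zero (fun t => (hderiv t).differentiableAt)
    (fun t => (hderiv t).deriv.trans (h t)) t s

theorem Submodule.orthogonalProjectionOnto_eq_of_inner_eq {K : Submodule ℝ V}
    [K.HasOrthogonalProjection] {x y : V} (h : ∀ k ∈ K, ⟪x, k⟫_ℝ = ⟪y, k⟫_ℝ) :
    K.orthogonalProjectionOnto x = K.orthogonalProjectionOnto y := by
  have hperp : x - y ∈ Kᗮ := fun k hk => by
    rw [real_inner_comm, inner_sub_left, h k hk, sub_self]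
  rw [← sub_eq_zero, ← map_sub]
  exact orthogonalProjectionOnto_apply_of_mem_orthogonal hperp

end

/-- For an Euler–Arnold solution with an `ad(𝔨)`-invariant inner product, the
`𝔨`-component of `u` is constant. -/
theorem euler_arnold_k_component_constant
    {V : Type*} [NormedAddCommGroup V] [InnerProductSpace ℝ V]
    (bracket : V → V → V)
    (hskew : ∀ x y : V, bracket x y = -bracket y x)
    (𝔨 : Submodule ℝ V) [CompleteSpace ↥𝔨]
    (hinv : ∀ k ∈ 𝔨, ∀ x y : V, ⟪bracket k x, y⟫_ℝ = -⟪x, bracket k y⟫_ℝ)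
    (u : ℝ → V) (hu : Differentiable ℝ u)
    (heuler : ∀ t : ℝ, ∀ x : V, ⟪deriv u t, x⟫_ℝ = ⟪u t, bracket (u t) x⟫_ℝ) :
    ∀ t ∈ Set.Icc (0:ℝ) 1,
      𝔨.orthogonalProjectionOnto (u t) = 𝔨.orthogonalProjectionOnto (u 0) := by
  intro t _
  refine 𝔨.orthogonalProjectionOnto_eq_of_inner_eq fun k hk => ?_
  refine inner_const_of_inner_deriv_eq_zero hu (fun s => ?_) t 0
  rw [heuler]
  exact inner_self_bracket_eq_zero_of_skewAdjoint hskew (hinv k hk) (u s)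
end

section
/- Let 𝔤 be a finite-dimensional real Lie algebra with inner product, 𝔤 = 𝔥 ⊕ 𝔨 an orthogonal splitting with 𝔨 a subalgebra satisfying [𝔨, 𝔥] ⊆ 𝔥. If u: I → 𝔥 and λ: I → 𝔨 satisfy ⟨u̇ + λ̇, x⟩ = ⟨u + λ, [u, x]⟩ for all x ∈ 𝔤 (the normal geodesic equation), and the inner product is ad(𝔨)-invariant, then λ is constant and u solves ⟨u̇, x⟩ = ⟨u + λ, [u, x]⟩ for all x ∈ 𝔤. -/
open scoped InnerProductSpace

theorem deriv_inner_zero_aux {V : Type*} [NormedAddCommGroup V] [InnerProductSpace ℝ V]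
    (f : ℝ → V) (hf : Differentiable ℝ f) (k : V)
    (h : ∀ t, ⟪f t, k⟫_ℝ = 0) (t : ℝ) : ⟪deriv f t, k⟫_ℝ = 0 := by
  have h1 : HasDerivAt (fun s => ⟪f s, k⟫_ℝ) (⟪f t, 0⟫_ℝ + ⟪deriv f t, k⟫_ℝ) t :=
    ((hf t).hasDerivAt).inner ℝ (hasDerivAt_const t k)
  have h2 : HasDerivAt (fun s => ⟪f s, k⟫_ℝ) 0 t := by
    have : (fun s => ⟪f s, k⟫_ℝ) = fun _ => (0 : ℝ) := funext h
    rw [this]; exact hasDerivAt_const t 0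
  simpa using h1.unique h2

/-- For the normal geodesic equation on a finite-dimensional Lie algebra
`𝔤 = 𝔥 ⊕ 𝔨` with `𝔥 = 𝔨ᗮ`, `𝔨` a subalgebra, `[𝔨, 𝔥] ⊆ 𝔥`, and an
`ad(𝔨)`-invariant inner product: `λ` is constant and `u` solves the reduced
equation. -/
theorem normal_geodesic_lambda_constant
    {V : Type*} [NormedAddCommGroup V] [InnerProductSpace ℝ V]
    [FiniteDimensional ℝ V]
    (bracket : V → V → V)
    (hskew : ∀ x y : V, bracket x y = -bracket y x)
    (𝔨 : Submodule ℝ V) (𝔥 : Submodule ℝ V) (h𝔥 : 𝔥 = 𝔨ᗮ)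
    (hsub : ∀ k₁ ∈ 𝔨, ∀ k₂ ∈ 𝔨, bracket k₁ k₂ ∈ 𝔨)
    (hkh : ∀ k ∈ 𝔨, ∀ h ∈ 𝔥, bracket k h ∈ 𝔥)
    (hinv : ∀ k ∈ 𝔨, ∀ x y : V, ⟪bracket k x, y⟫_ℝ = -⟪x, bracket k y⟫_ℝ)
    (u : ℝ → V) (lam : ℝ → V)
    (hu𝔥 : ∀ t, u t ∈ 𝔥) (hlam𝔨 : ∀ t, lam t ∈ 𝔨)
    (hud : Differentiable ℝ u) (hlamd : Differentiable ℝ lam)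
    (heq : ∀ t : ℝ, ∀ x : V,
      ⟪deriv u t + deriv lam t, x⟫_ℝ = ⟪u t + lam t, bracket (u t) x⟫_ℝ) :
    (∀ t : ℝ, lam t = lam 0) ∧
    (∀ t : ℝ, ∀ x : V, ⟪deriv u t, x⟫_ℝ = ⟪u t + lam t, bracket (u t) x⟫_ℝ) := by
  -- right hand side vanishes against elements of 𝔨
  have hrhs : ∀ t : ℝ, ∀ k ∈ 𝔨, ⟪u t + lam t, bracket (u t) k⟫_ℝ = 0 := by
    intro t k hk
    have hb : bracket (u t) k = -bracket k (u t) := hskew _ _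
    have hmem : bracket k (u t) ∈ 𝔥 := hkh k hk (u t) (hu𝔥 t)
    have hlam0 : ⟪lam t, bracket k (u t)⟫_ℝ = 0 := by
      rw [h𝔥] at hmem
      exact (Submodule.mem_orthogonal 𝔨 _).1 hmem (lam t) (hlam𝔨 t)
    have hu0 : ⟪u t, bracket k (u t)⟫_ℝ = 0 := by
      have h1 := hinv k hk (u t) (u t)
      have h2 : ⟪bracket k (u t), u t⟫_ℝ = ⟪u t, bracket k (u t)⟫_ℝ :=
        real_inner_comm _ _
      linarith [h1, h2]
    rw [hb, inner_neg_right, inner_add_left, hu0, hlam0]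
    ring
  -- ⟪deriv u t, k⟫ = 0 for k ∈ 𝔨
  have hudk : ∀ t : ℝ, ∀ k ∈ 𝔨, ⟪deriv u t, k⟫_ℝ = 0 := by
    intro t k hk
    refine deriv_inner_zero_aux u hud k (fun s => ?_) t
    have := hu𝔥 s
    rw [h𝔥] at this
    exact (Submodule.mem_orthogonal' 𝔨 _).1 this k hk
  -- ⟪deriv lam t, k⟫ = 0 for k ∈ 𝔨
  have hldk : ∀ t : ℝ, ∀ k ∈ 𝔨, ⟪deriv lam t, k⟫_ℝ = 0 := by
    intro t k hk
    have := heq t k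
    rw [hrhs t k hk, inner_add_left, hudk t k hk] at this
    linarith
  -- ⟪deriv lam t, h⟫ = 0 for h ∈ 𝔥, hence deriv lam t = 0
  have hld0 : ∀ t : ℝ, deriv lam t = 0 := by
    intro t
    have hmem : deriv lam t ∈ 𝔨 := by
      have : deriv lam t ∈ 𝔨ᗮᗮ := by
        rw [Submodule.mem_orthogonal]
        intro h hh
        rw [← h𝔥] at hh
        rw [real_inner_comm]
        refine deriv_inner_zero_aux lam hlamd h (fun s => ?_) t
        rw [h𝔥] at hh
        rw [real_inner_comm]; exact (Submodule.mem_orthogonal' 𝔨 _).1 hh _ (hlam𝔨 s)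
      rwa [Submodule.orthogonal_orthogonal] at this
    have := hldk t _ hmem
    exact inner_self_eq_zero.1 this
  constructor
  · intro t
    exact is_const_of_deriv_eq_zero hlamd hld0 t 0
  · intro t x
    have := heq t x
    rw [hld0 t, add_zero] at this
    exact this
end
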